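/- For any M > 0, ∫_ε^∞ ((τ − ε)/τ²) exp(−M(τ−ε)²/τ) dτ → ∞ as ε → 0⁺. In particular, for fixed M the function ε ↦ ∫_ε^1 ((τ − ε)/τ²) exp(−M(τ−ε)²/τ) dτ diverges like |log ε| as ε → 0⁺. -/

import Mathlib

open MeasureTheory Real Filter Set


noncomputable def f9 (M ε τ : ℝ) : ℝ := ((τ - ε) / τ ^ 2) * Real.exp (-M * (τ - ε) ^ 2 / τ)

lemma f9_nonneg {M ε τ : ℝ} (hε : 0 ≤ ε) (hτ : ε ≤ τ) : 0 ≤ f9 M ε τ :=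
  mul_nonneg (div_nonneg (by linarith) (by positivity)) (Real.exp_pos _).le

lemma f9_continuousOn {M ε : ℝ} {s : Set ℝ} (hs : ∀ τ ∈ s, τ ≠ 0) :
    ContinuousOn (f9 M ε) s := by
  unfold f9
  apply ContinuousOn.mul
  · exact ContinuousOn.div (by fun_prop) (by fun_prop) (fun τ hτ => pow_ne_zero _ (hs τ hτ))
  · exact Real.continuous_exp.comp_continuousOn
      (ContinuousOn.div (by fun_prop) (by fun_prop) hs)

lemma f9_intOn_Ioc {M ε a b : ℝ} (ha : 0 < a) :
    IntegrableOn (f9 M ε) (Ioc a b) := by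
  apply (f9_continuousOn (fun τ hτ => _)).integrableOn_Icc.mono_set Ioc_subset_Icc_self
  rintro τ ⟨h1, _⟩
  exact ne_of_gt (lt_of_lt_of_le ha h1)

lemma f9_intOn_Ioi1 {M ε : ℝ} (hM : 0 < M) (hε : 0 < ε) (hε2 : ε ≤ 1/2) :
    IntegrableOn (f9 M ε) (Ioi 1) := by
  apply Integrable.mono' (exp_neg_integrableOn_Ioi 1 (by positivity : 0 < M/4))
  · exact (f9_continuousOn (fun τ hτ => ne_of_gt (lt_trans one_pos hτ))).aestronglyMeasurable
      measurableSet_Ioi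
  · rw [ae_restrict_iff' measurableSet_Ioi]
    filter_upwards with τ hτ
    have hτ1 : (1:ℝ) < τ := hτ
    have hτ0 : (0:ℝ) < τ := by linarith
    rw [Real.norm_eq_abs, abs_of_nonneg (f9_nonneg hε.le (by linarith))]
    unfold f9
    have h1 : (τ - ε) / τ ^ 2 ≤ 1 := by
      rw [div_le_one (by positivity)]; nlinarith
    have h2 : Real.exp (-M * (τ - ε) ^ 2 / τ) ≤ Real.exp (-(M/4) * τ) := by
      apply Real.exp_le_exp.mpr
      rw [div_le_iff₀ hτ0]
      nlinarith [mul_nonneg hM.le (mul_nonneg (by linarith : (0:ℝ) ≤ τ - ε - τ/2) (by linarith : (0:ℝ) ≤ τ - ε + τ/2))]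
    calc (τ - ε) / τ ^ 2 * Real.exp (-M * (τ - ε) ^ 2 / τ)
        ≤ 1 * Real.exp (-(M/4) * τ) :=
          mul_le_mul h1 h2 (Real.exp_pos _).le one_pos.le
      _ = Real.exp (-(M/4) * τ) := one_mul _

lemma f9_intOn_Ioi {M ε : ℝ} (hM : 0 < M) (hε : 0 < ε) (hε2 : ε ≤ 1/2) :
    IntegrableOn (f9 M ε) (Ioi ε) := by
  have : Ioi ε = Ioc ε 1 ∪ Ioi 1 := (Ioc_union_Ioi_eq_Ioi (by linarith)).symm
  rw [this]
  exact (f9_intOn_Ioc hε).union (f9_intOn_Ioi1 hM hε hε2)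

lemma inv_integral_Ioc {a : ℝ} (ha : 0 < a) (ha1 : a ≤ 1) :
    ∫ τ in Ioc a 1, τ⁻¹ = -Real.log a := by
  rw [← intervalIntegral.integral_of_le ha1, integral_inv]
  · rw [one_div, Real.log_inv]
  · rw [Set.uIcc_of_le ha1]
    rintro ⟨h0, _⟩; linarith



lemma inv_intOn_Ioc {a b : ℝ} (ha : 0 < a) :
    IntegrableOn (fun τ : ℝ => τ⁻¹) (Ioc a b) := by
  apply (ContinuousOn.inv₀ continuousOn_id (fun τ hτ => ?_)).integrableOn_Icc.mono_set
    Ioc_subset_Icc_self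
  exact ne_of_gt (lt_of_lt_of_le ha hτ.1)

lemma f9_upper {M ε : ℝ} (hM : 0 < M) (hε : 0 < ε) (hε1 : ε ≤ 1) :
    ∫ τ in Ioc ε 1, f9 M ε τ ≤ -Real.log ε := by
  rw [← inv_integral_Ioc hε hε1]
  apply setIntegral_mono_on (f9_intOn_Ioc hε) (inv_intOn_Ioc hε) measurableSet_Ioc
  intro τ hτ
  have hτ0 : 0 < τ := lt_trans hε hτ.1
  have h2 : Real.exp (-M * (τ - ε) ^ 2 / τ) ≤ 1 := by
    rw [Real.exp_le_one_iff]
    apply div_nonpos_of_nonpos_of_nonneg _ hτ0.le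
    nlinarith [sq_nonneg (τ - ε)]
  calc f9 M ε τ ≤ (τ - ε) / τ ^ 2 * 1 := by
        unfold f9
        apply mul_le_mul_of_nonneg_left h2 (div_nonneg (by linarith [hτ.1]) (by positivity))
    _ ≤ τ / τ ^ 2 := by rw [mul_one]; gcongr; linarith
    _ = τ⁻¹ := by field_simp [pow_two]

lemma f9_lower {M ε : ℝ} (hM : 0 < M) (hε : 0 < ε) (hε4 : ε ≤ 1/4) :
    Real.exp (-M)/4 * (-Real.log ε) ≤ ∫ τ in Ioc ε 1, f9 M ε τ := by
  have h2ε : (0:ℝ) < 2*ε := by linarith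
  have h2ε1 : 2*ε ≤ 1 := by linarith
  have step1 : ∫ τ in Ioc (2*ε) 1, f9 M ε τ ≤ ∫ τ in Ioc ε 1, f9 M ε τ := by
    apply setIntegral_mono_set (f9_intOn_Ioc hε)
    · filter_upwards [ae_restrict_mem measurableSet_Ioc] with τ hτ
      exact f9_nonneg hε.le hτ.1.le
    · exact Filter.Eventually.of_forall (Ioc_subset_Ioc_left (by linarith))
  have step2 : ∫ τ in Ioc (2*ε) 1, (Real.exp (-M)/2) * τ⁻¹ ≤ ∫ τ in Ioc (2*ε) 1, f9 M ε τ := by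
    apply setIntegral_mono_on ((inv_intOn_Ioc h2ε).const_mul _) (f9_intOn_Ioc h2ε)
      measurableSet_Ioc
    intro τ hτ
    have hτ2 : 2*ε < τ := hτ.1
    have hτ0 : 0 < τ := lt_trans h2ε hτ2
    have h1 : (2*τ)⁻¹ ≤ (τ - ε) / τ ^ 2 := by
      rw [inv_eq_one_div, div_le_div_iff₀ (by positivity) (by positivity)]
      nlinarith
    have h2 : Real.exp (-M) ≤ Real.exp (-M * (τ - ε) ^ 2 / τ) := by
      apply Real.exp_le_exp.mpr
      rw [le_div_iff₀ hτ0]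
      have f1 : (τ - ε)^2 ≤ τ^2 := by nlinarith
      have f2 : τ^2 ≤ τ := by nlinarith [hτ.2]
      nlinarith [mul_le_mul_of_nonneg_left (f1.trans f2) hM.le]
    calc (Real.exp (-M)/2) * τ⁻¹ = (2*τ)⁻¹ * Real.exp (-M) := by
          rw [mul_inv]; ring
      _ ≤ ((τ - ε) / τ ^ 2) * Real.exp (-M * (τ - ε) ^ 2 / τ) :=
          mul_le_mul h1 h2 (Real.exp_pos _).le (div_nonneg (by linarith) (by positivity))
      _ = f9 M ε τ := rfl
  have hval : ∫ τ in Ioc (2*ε) 1, (Real.exp (-M)/2) * τ⁻¹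
      = (Real.exp (-M)/2) * (-Real.log (2*ε)) := by
    rw [MeasureTheory.integral_const_mul, inv_integral_Ioc h2ε h2ε1]
  have hlog2 : Real.log (2*ε) = Real.log 2 + Real.log ε :=
    Real.log_mul (by norm_num) (ne_of_gt hε)
  have hlogε : Real.log ε ≤ -(2 * Real.log 2) := by
    have := Real.log_le_log hε (show ε ≤ 1/4 from hε4)
    have h4 : Real.log (1/4 : ℝ) = -(2*Real.log 2) := by
      rw [one_div, Real.log_inv, show (4:ℝ) = 2^2 by norm_num, Real.log_pow]
      push_cast; ring
    linarith [h4 ▸ this]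
  have hfinal : Real.exp (-M)/4 * (-Real.log ε) ≤ (Real.exp (-M)/2) * (-Real.log (2*ε)) := by
    rw [hlog2]
    nlinarith [Real.exp_pos (-M), Real.log_pos (by norm_num : (1:ℝ) < 2)]
  linarith [hval ▸ step2]



/-- for any `M > 0`, `∫_ε^∞ ((τ−ε)/τ²) e^{−M(τ−ε)²/τ} dτ → ∞` as `ε → 0⁺`;
in particular, the integral over `(ε,1)` diverges like `|log ε|`: it is bounded above and
below by positive multiples of `|log ε|` for small `ε`. -/
theorem stmt_9 (M : ℝ) (hM : 0 < M) :
    Tendsto (fun ε : ℝ =>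
        ∫ τ in Set.Ioi ε, ((τ - ε) / τ ^ 2) * Real.exp (-M * (τ - ε) ^ 2 / τ))
      (nhdsWithin 0 (Set.Ioi 0)) atTop ∧
    ∃ c > (0:ℝ), ∃ C > (0:ℝ), ∀ᶠ ε in nhdsWithin (0:ℝ) (Set.Ioi 0),
      c * |Real.log ε| ≤
        (∫ τ in Set.Ioc ε 1, ((τ - ε) / τ ^ 2) * Real.exp (-M * (τ - ε) ^ 2 / τ)) ∧
      (∫ τ in Set.Ioc ε 1, ((τ - ε) / τ ^ 2) * Real.exp (-M * (τ - ε) ^ 2 / τ))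
        ≤ C * |Real.log ε| := by
  have hrw : ∀ ε τ : ℝ, ((τ - ε) / τ ^ 2) * Real.exp (-M * (τ - ε) ^ 2 / τ) = f9 M ε τ :=
    fun _ _ => rfl
  simp only [hrw]
  have hmem : Ioo (0:ℝ) (1/4) ∈ nhdsWithin (0:ℝ) (Set.Ioi 0) :=
    Ioo_mem_nhdsGT_of_mem (by norm_num)
  have habs : ∀ ε : ℝ, ε ∈ Ioo (0:ℝ) (1/4) → |Real.log ε| = -Real.log ε := fun ε hε =>
    abs_of_nonpos (Real.log_nonpos hε.1.le (by linarith [hε.2]))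
  have hsub : ∀ ε : ℝ, ε ∈ Ioo (0:ℝ) (1/4) →
      ∫ τ in Ioc ε 1, f9 M ε τ ≤ ∫ τ in Ioi ε, f9 M ε τ := by
    intro ε hε
    apply setIntegral_mono_set (f9_intOn_Ioi hM hε.1 (by linarith [hε.2]))
    · filter_upwards [ae_restrict_mem measurableSet_Ioi] with τ hτ
      exact f9_nonneg hε.1.le hτ.le
    · exact Filter.Eventually.of_forall Ioc_subset_Ioi_self
  constructor
  · have hlow : Tendsto (fun ε : ℝ => Real.exp (-M)/4 * (-Real.log ε))
        (nhdsWithin (0:ℝ) (Set.Ioi 0)) atTop := by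
      apply Tendsto.const_mul_atTop (by positivity : (0:ℝ) < Real.exp (-M)/4)
      exact tendsto_neg_atBot_atTop.comp tendsto_log_nhdsGT_zero
    apply tendsto_atTop_mono' _ _ hlow
    filter_upwards [hmem] with ε hε
    exact le_trans (f9_lower hM hε.1 hε.2.le) (hsub ε hε)
  · refine ⟨Real.exp (-M)/4, by positivity, 1, one_pos, ?_⟩
    filter_upwards [hmem] with ε hε
    rw [habs ε hε, one_mul]
    exact ⟨f9_lower hM hε.1 hε.2.le, f9_upper hM hε.1 (by linarith [hε.2])⟩
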